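/- Let N ≥ 2 and η_α = exp(2πiα/N) for α = 1,…,N-1. Then ∑_{α=1}^{N-1} 1/(η_α - 1)² = -(N-1)(N-5)/12. -/

import Mathlib

open Finset Complex

noncomputable def η (N α : ℕ) : ℂ := Complex.exp (2 * Real.pi * Complex.I * α / N)

/-!
For an `n`-th root of unity `x ≠ 1` one has `(x - 1) * ∑_{k<n} k x^k = n`, so
`1 / (x - 1)^2 = (∑_{k<n} k x^k)^2 / n^2`. Summing the squares over all `n`-th roots of unity
`x = ζ^α` is a discrete Parseval identity: by orthogonality only the pairs `k + j ≡ 0 (mod n)`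
survive, which gives `n * ∑_{k<n} k (n - k)`. Removing the term `x = 1`, which is
`(∑_{k<n} k)^2`, leaves power sums with closed forms.
-/

theorem sub_one_mul_sum_range_natCast_mul_pow {R : Type*} [CommRing R] (x : R) (n : ℕ) :
    (x - 1) * ∑ k ∈ range n, (k : R) * x ^ k = n * x ^ n - x * ∑ k ∈ range n, x ^ k := by
  induction n with
  | zero => simp
  | succ n ih =>
    rw [sum_range_succ, sum_range_succ]
    push_cast
    linear_combination ih

theorem sum_range_natCast_mul_two {R : Type*} [CommRing R] (n : ℕ) :
    (∑ k ∈ range n, (k : R)) * 2 = n * (n - 1) := by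
  induction n with
  | zero => simp
  | succ n ih =>
    rw [sum_range_succ]
    push_cast
    linear_combination ih

theorem sum_range_natCast_sq_mul_six {R : Type*} [CommRing R] (n : ℕ) :
    (∑ k ∈ range n, (k : R) ^ 2) * 6 = n * (n - 1) * (2 * n - 1) := by
  induction n with
  | zero => simp
  | succ n ih =>
    rw [sum_range_succ]
    push_cast
    linear_combination ih

theorem Nat.dvd_add_iff_eq_sub_mod {n k j : ℕ} (hk : k < n) (hj : j < n) :
    n ∣ k + j ↔ j = (n - k) % n := by
  rw [Nat.dvd_iff_mod_eq_zero]
  rcases Nat.eq_zero_or_pos k with rfl | hk0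
  · rw [Nat.sub_zero, Nat.mod_self, zero_add, Nat.mod_eq_of_lt hj]
  · rw [Nat.mod_eq_of_lt (by omega : n - k < n)]
    rcases lt_or_ge (k + j) n with h | h
    · rw [Nat.mod_eq_of_lt h]; omega
    · rw [Nat.mod_eq_sub_mod h, Nat.mod_eq_of_lt (by omega)]; omega

section
variable {R : Type*} [CommRing R] [IsDomain R]

theorem geom_sum_eq_zero_of_pow_eq_one {x : R} {n : ℕ} (hx : x ^ n = 1) (h1 : x ≠ 1) :
    ∑ k ∈ range n, x ^ k = 0 := by
  have h := geom_sum_mul x n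
  rw [hx, sub_self] at h
  exact (mul_eq_zero.1 h).resolve_right (sub_ne_zero.2 h1)

theorem sub_one_mul_sum_range_natCast_mul_pow_of_pow_eq_one {x : R} {n : ℕ} (hx : x ^ n = 1)
    (h1 : x ≠ 1) : (x - 1) * ∑ k ∈ range n, (k : R) * x ^ k = n := by
  rw [sub_one_mul_sum_range_natCast_mul_pow, hx, geom_sum_eq_zero_of_pow_eq_one hx h1]
  ring

namespace IsPrimitiveRoot
variable {ζ : R} {n : ℕ}

theorem sum_range_pow_pow (hζ : IsPrimitiveRoot ζ n) (m : ℕ) :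
    ∑ α ∈ range n, (ζ ^ m) ^ α = if n ∣ m then (n : R) else 0 := by
  split_ifs with h
  · simp [(hζ.pow_eq_one_iff_dvd m).2 h]
  · refine geom_sum_eq_zero_of_pow_eq_one ?_ (mt (hζ.pow_eq_one_iff_dvd m).1 h)
    rw [← pow_mul, pow_mul', hζ.pow_eq_one, one_pow]

theorem sum_range_sq_sum_mul_pow (hζ : IsPrimitiveRoot ζ n) (a : ℕ → R) :
    ∑ α ∈ range n, (∑ k ∈ range n, a k * (ζ ^ α) ^ k) ^ 2 =
      n * ∑ k ∈ range n, a k * a ((n - k) % n) := by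
  calc _ = ∑ k ∈ range n, ∑ j ∈ range n, a k * a j * ∑ α ∈ range n, (ζ ^ (k + j)) ^ α := by
        simp_rw [sq, sum_mul_sum, mul_sum]
        rw [sum_comm]
        refine sum_congr rfl fun k _ ↦ ?_
        rw [sum_comm]
        refine sum_congr rfl fun j _ ↦ sum_congr rfl fun α _ ↦ ?_
        ring
    _ = ∑ k ∈ range n, n * (a k * a ((n - k) % n)) := by
        refine sum_congr rfl fun k hk ↦ ?_
        rw [mem_range] at hk
        simp_rw [hζ.sum_range_pow_pow, mul_ite, mul_zero]
        rw [sum_congr rfl fun j hj ↦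
            if_congr (Nat.dvd_add_iff_eq_sub_mod hk (mem_range.1 hj)) rfl rfl,
          sum_ite_eq' (range n), if_pos (mem_range.2 (Nat.mod_lt _ (by omega)))]
        ring
    _ = _ := (mul_sum ..).symm

end IsPrimitiveRoot
end

theorem one_div_sub_one_sq_eq_of_pow_eq_one {K : Type*} [Field K] {x : K} {n : ℕ}
    (hn : (n : K) ≠ 0) (hx : x ^ n = 1) (h1 : x ≠ 1) :
    1 / (x - 1) ^ 2 = (∑ k ∈ range n, (k : K) * x ^ k) ^ 2 / n ^ 2 := by
  have hx1 : x - 1 ≠ 0 := sub_ne_zero.2 h1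
  rw [eq_div_iff (pow_ne_zero 2 hn), ← sub_one_mul_sum_range_natCast_mul_pow_of_pow_eq_one hx h1,
    mul_pow, one_div, inv_mul_cancel_left₀ (pow_ne_zero 2 hx1)]

theorem IsPrimitiveRoot.sum_one_div_pow_sub_one_sq {K : Type*} [Field K] [CharZero K] {ζ : K}
    {n : ℕ} (hζ : IsPrimitiveRoot ζ n) (hn : 0 < n) :
    ∑ α ∈ Icc 1 (n - 1), 1 / (ζ ^ α - 1) ^ 2 = -((n : K) - 1) * ((n : K) - 5) / 12 := by
  have hn0 : (n : K) ≠ 0 := Nat.cast_ne_zero.2 hn.ne'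
  set f : ℕ → K := fun α ↦ ∑ k ∈ range n, (k : K) * (ζ ^ α) ^ k
  have hterm : ∀ α ∈ Icc 1 (n - 1), 1 / (ζ ^ α - 1) ^ 2 = f α ^ 2 / n ^ 2 := fun α hα ↦ by
    rw [mem_Icc] at hα
    refine one_div_sub_one_sq_eq_of_pow_eq_one hn0 ?_
      (hζ.pow_ne_one_of_pos_of_lt (by omega) (by omega))
    rw [← pow_mul, pow_mul', hζ.pow_eq_one, one_pow]
  have hsplit : ∑ α ∈ range n, f α ^ 2 = f 0 ^ 2 + ∑ α ∈ Icc 1 (n - 1), f α ^ 2 := by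
    rw [range_eq_Ico, sum_eq_sum_Ico_succ_bot hn,
      Icc_sub_one_right_eq_Ico_of_not_isMin (by simpa using hn.ne')]
  have hpair :
      ∑ k ∈ range n, (k : K) * ((n - k) % n : ℕ) = ∑ k ∈ range n, ((n : K) * k - k ^ 2) := by
    refine sum_congr rfl fun k hk ↦ ?_
    rcases Nat.eq_zero_or_pos k with rfl | hk0
    · simp
    rw [Nat.mod_eq_of_lt (by omega), Nat.cast_sub (mem_range.1 hk).le]
    ring
  have hf0 : f 0 = ∑ k ∈ range n, (k : K) := by simp [f]
  rw [sum_congr rfl hterm, ← sum_div, eq_sub_of_add_eq' hsplit.symm,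
    hζ.sum_range_sq_sum_mul_pow, hpair, sum_sub_distrib, ← mul_sum, hf0]
  field_simp
  linear_combination
    (6 * (n : K) ^ 2 - 6 * ∑ k ∈ range n, (k : K) - 3 * n * (n - 1)) *
        sum_range_natCast_mul_two (R := K) n -
      2 * n * sum_range_natCast_sq_mul_six (R := K) n

theorem η_eq_pow (N α : ℕ) : η N α = Complex.exp (2 * Real.pi * Complex.I / N) ^ α := by
  rw [η, ← Complex.exp_nat_mul]
  ring_nf

theorem stmt_8 (N : ℕ) (hN : 2 ≤ N) :
    ∑ α ∈ Finset.Icc 1 (N - 1), 1 / (η N α - 1) ^ 2 =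
      -((N : ℂ) - 1) * ((N : ℂ) - 5) / 12 := by
  simp_rw [η_eq_pow]
  exact (Complex.isPrimitiveRoot_exp N (by omega)).sum_one_div_pow_sub_one_sq (by omega)
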